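/- There is a constant C such that for all integers n ≥ 2, ‖e_n‖_{L^3(B)} ≤ C (log n)^{1/3}, where e_n(x) = sin(nπ|x|)/|x| on the unit ball B ⊂ ℝ³. -/

import Mathlib

/-!
Since `|sin t| ≤ min |t| 1`, the eigenfunction is dominated by the radial majorant
`min (nπ) |x|⁻¹`. In polar coordinates its cube integrates to
`3 |B| ∫₀¹ r² min (nπ) r⁻¹ ³ dr = 3 |B| (1/3 + log (nπ))`: the plateau `r ≤ 1/(nπ)` contributes
`1/3`, the tail `r⁻¹` contributes the logarithm. For `n ≥ 2` this is `O(log n)`.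
-/

open Real MeasureTheory

noncomputable abbrev E3 := EuclideanSpace ℝ (Fin 3)

/-- The open unit ball in `ℝ³`. -/
noncomputable def B3 : Set E3 := Metric.ball 0 1

open Classical in
/-- The radial eigenfunction `e_n(x) = sin(nπ|x|)/|x|`, extended by `e_n(0) = nπ`. -/
noncomputable def eFun (n : ℕ) (x : E3) : ℝ :=
  if x = 0 then n * Real.pi else Real.sin (n * Real.pi * ‖x‖) / ‖x‖

open Set Metric

lemma Real.abs_sin_mul_div_le_min {b r : ℝ} (hb : 0 ≤ b) (hr : 0 < r) :
    |sin (b * r)| / r ≤ min b r⁻¹ := by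
  refine le_min ?_ ?_
  · calc |sin (b * r)| / r ≤ |b * r| / r := div_le_div_of_nonneg_right abs_sin_le_abs hr.le
      _ = b := by rw [abs_of_nonneg (by positivity)]; field_simp
  · simpa [div_eq_mul_inv] using
      mul_le_mul_of_nonneg_right (abs_sin_le_one (b * r)) (inv_nonneg.2 hr.le)

lemma abs_eFun_le (n : ℕ) {x : E3} (hx : x ≠ 0) : |eFun n x| ≤ min (n * π) ‖x‖⁻¹ := by
  rw [eFun, if_neg hx, abs_div, abs_norm]
  exact abs_sin_mul_div_le_min (by positivity) (norm_pos_iff.2 hx)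

lemma MeasureTheory.Measure.setIntegral_ball_fun_norm_addHaar {E F : Type*}
    [NormedAddCommGroup E] [NormedSpace ℝ E] [Nontrivial E] [FiniteDimensional ℝ E]
    [MeasurableSpace E] [BorelSpace E] (μ : Measure E) [μ.IsAddHaarMeasure]
    [NormedAddCommGroup F] [NormedSpace ℝ F] (f : ℝ → F) {R : ℝ} (hR : 0 ≤ R) :
    ∫ x in ball 0 R, f ‖x‖ ∂μ =
      Module.finrank ℝ E • μ.real (ball 0 1) •
        ∫ y in 0..R, y ^ (Module.finrank ℝ E - 1) • f y := by
  have hball (x : E) :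
      (ball (0 : E) R).indicator (fun x => f ‖x‖) x = (Iio R).indicator f ‖x‖ := by
    simp [indicator]
  rw [← integral_indicator measurableSet_ball]
  simp_rw [hball]
  rw [integral_fun_norm_addHaar μ ((Iio R).indicator f), intervalIntegral.integral_of_le hR,
    integral_Ioc_eq_integral_Ioo]
  simp_rw [← indicator_smul_apply (Iio R) (fun y : ℝ => y ^ (Module.finrank ℝ E - 1))]
  rw [setIntegral_indicator measurableSet_Iio, Ioi_inter_Iio]

lemma integral_sq_mul_min_inv_pow_three {b : ℝ} (hb : 1 ≤ b) :
    ∫ r in 0..1, r ^ 2 * min b r⁻¹ ^ 3 = 1 / 3 + log b := by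
  have hb0 : 0 < b := by linarith
  have ha : b⁻¹ ≤ 1 := inv_le_one_of_one_le₀ hb
  have hplateau :
      EqOn (fun r => r ^ 2 * min b r⁻¹ ^ 3) (fun r => b ^ 3 * r ^ 2) (uIcc 0 b⁻¹) := by
    intro r hr
    rw [uIcc_of_le (by positivity)] at hr
    rcases hr.1.eq_or_lt with rfl | hr0
    · simp
    · simp only
      rw [min_eq_left ((le_inv_comm₀ hr0 hb0).1 hr.2)]
      ring
  have htail : EqOn (fun r => r ^ 2 * min b r⁻¹ ^ 3) (fun r => r⁻¹) (uIcc b⁻¹ 1) := by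
    intro r hr
    rw [uIcc_of_le ha] at hr
    have hr0 : 0 < r := (inv_pos.2 hb0).trans_le hr.1
    simp only
    rw [min_eq_right ((inv_le_comm₀ hb0 hr0).1 hr.1)]
    field_simp
  have hint_plateau : IntervalIntegrable (fun r => r ^ 2 * min b r⁻¹ ^ 3) volume 0 b⁻¹ :=
    (intervalIntegrable_congr (hplateau.mono uIoc_subset_uIcc).symm).1
      (Continuous.intervalIntegrable (by fun_prop) _ _)
  have hint_tail : IntervalIntegrable (fun r => r ^ 2 * min b r⁻¹ ^ 3) volume b⁻¹ 1 :=
    (intervalIntegrable_congr (htail.mono uIoc_subset_uIcc).symm).1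
      (intervalIntegral.intervalIntegrable_inv
        (fun r hr => ((inv_pos.2 hb0).trans_le (uIcc_of_le ha ▸ hr).1).ne') (by fun_prop))
  rw [← intervalIntegral.integral_add_adjacent_intervals hint_plateau hint_tail,
    intervalIntegral.integral_congr hplateau, intervalIntegral.integral_congr htail,
    intervalIntegral.integral_const_mul, integral_pow,
    integral_inv_of_pos (by positivity) one_pos, one_div, inv_inv]
  norm_num
  field_simp

lemma setIntegral_abs_eFun_rpow_three_le {n : ℕ} (hn : 1 ≤ n) :
    ∫ x in B3, |eFun n x| ^ (3 : ℝ) ≤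
      3 * volume.real (ball (0 : E3) 1) * (1 / 3 + log (n * π)) := by
  set b : ℝ := n * π
  have hb : 1 ≤ b := by
    have : (1 : ℝ) ≤ n := by exact_mod_cast hn
    nlinarith [pi_gt_three]
  have hmajorant : IntegrableOn (fun x : E3 => min b ‖x‖⁻¹ ^ 3) B3 := by
    refine Measure.integrableOn_of_bounded measure_ball_lt_top.ne (by fun_prop) (M := b ^ 3)
      (ae_of_all _ fun x => ?_)
    have h0 : 0 ≤ min b ‖x‖⁻¹ := le_min (by linarith) (by positivity)
    rw [norm_pow, Real.norm_of_nonneg h0]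
    exact pow_le_pow_left₀ h0 (min_le_left _ _) 3
  -- the majorant is `0` at the origin (`0⁻¹ = 0`), so the bound only holds almost everywhere
  have hne : ∀ᵐ x : E3 ∂volume.restrict B3, x ≠ 0 :=
    ae_restrict_of_ae (compl_mem_ae_iff.2 (measure_singleton 0))
  calc ∫ x in B3, |eFun n x| ^ (3 : ℝ) ≤ ∫ x in ball (0 : E3) 1, min b ‖x‖⁻¹ ^ 3 := by
        refine integral_mono_of_nonneg (ae_of_all _ fun x => by positivity) hmajorant ?_
        filter_upwards [hne] with x hx
        rw [rpow_ofNat]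
        exact pow_le_pow_left₀ (abs_nonneg _) (abs_eFun_le n hx) 3
    _ = 3 * volume.real (ball (0 : E3) 1) * ∫ r in 0..1, r ^ 2 * min b r⁻¹ ^ 3 := by
        rw [Measure.setIntegral_ball_fun_norm_addHaar volume (fun r => min b r⁻¹ ^ 3)
          zero_le_one, finrank_euclideanSpace_fin]
        simp only [smul_eq_mul, nsmul_eq_mul]
        push_cast
        ring
    _ = 3 * volume.real (ball (0 : E3) 1) * (1 / 3 + log b) := by
        rw [integral_sq_mul_min_inv_pow_three hb]

lemma add_log_le_mul_log {c x : ℝ} (hc : 0 ≤ c) (hx : 2 ≤ x) :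
    c + log x ≤ (1 + c / log 2) * log x := by
  have hlog2 : 0 < log 2 := log_pos one_lt_two
  have hc_le : c ≤ c / log 2 * log x := by
    rw [div_mul_eq_mul_div, le_div_iff₀ hlog2]
    exact mul_le_mul_of_nonneg_left (log_le_log two_pos hx) hc
  linarith

theorem eigenfunction_L3_bound :
    ∃ C > 0, ∀ n : ℕ, 2 ≤ n →
      (∫ x in B3, |eFun n x| ^ (3 : ℝ)) ^ ((1 : ℝ) / 3) ≤ C * (Real.log n) ^ ((1 : ℝ) / 3) := by
  set V : ℝ := volume.real (ball (0 : E3) 1)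
  have hV : 0 < V :=
    ENNReal.toReal_pos (measure_ball_pos volume 0 one_pos).ne' measure_ball_lt_top.ne
  have hc : 0 ≤ 1 / 3 + log π := by linarith [log_nonneg (by linarith [pi_gt_three] : 1 ≤ π)]
  set K : ℝ := 3 * V * (1 + (1 / 3 + log π) / log 2)
  have hK : 0 < K := by have := log_pos one_lt_two; positivity
  refine ⟨K ^ ((1 : ℝ) / 3), rpow_pos_of_pos hK _, fun n hn => ?_⟩
  have hn' : (2 : ℝ) ≤ n := by exact_mod_cast hn
  have hbound : ∫ x in B3, |eFun n x| ^ (3 : ℝ) ≤ K * log n :=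
    calc ∫ x in B3, |eFun n x| ^ (3 : ℝ) ≤ 3 * V * (1 / 3 + log (n * π)) :=
          setIntegral_abs_eFun_rpow_three_le (by omega)
      _ = 3 * V * ((1 / 3 + log π) + log n) := by
          rw [log_mul (by positivity) pi_ne_zero]
          ring
      _ ≤ 3 * V * ((1 + (1 / 3 + log π) / log 2) * log n) := by
          gcongr
          exact add_log_le_mul_log hc hn'
      _ = K * log n := by
          simp only [K]
          ring
  have hint : 0 ≤ ∫ x in B3, |eFun n x| ^ (3 : ℝ) := by positivity
  calc (∫ x in B3, |eFun n x| ^ (3 : ℝ)) ^ ((1 : ℝ) / 3)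
      ≤ (K * log n) ^ ((1 : ℝ) / 3) := rpow_le_rpow hint hbound (by norm_num)
    _ = K ^ ((1 : ℝ) / 3) * log n ^ ((1 : ℝ) / 3) :=
        mul_rpow hK.le (log_nonneg (by linarith))
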